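/- arXiv:1701.02603 — 6 statements merged into one kernel-verified Lean document; each statement's English description precedes it below -/
import Mathlib

section
/- Let g₁ be a quaternionic n×n matrix with g₁ᴴ·g₁ = 1, let g₂ be a real k×k orthogonal matrix regarded as a quaternionic matrix with real entries, and let g be the block-diagonal quaternionic (n+k)×(n+k) matrix with diagonal blocks g₁ and g₂. Let ξ = fromBlocks(0, C, -Cᴴ, E), where C is any quaternionic n×k matrix and E = iB + jC' + kD with B, C', D real symmetric k×k matrices. Then g·ξ·gᴴ again has the form fromBlocks(0, C₁, -C₁ᴴ, E₁) with C₁ a quaternionic n×k matrix and E₁ = iB₁ + jC₁' + kD₁ for real symmetric k×k matrices B₁, C₁', D₁. In particular, the subspace 𝔣 of such matrices ξ is invariant under conjugation by the subgroup Sp(n)×SO(k) of Sp(n+k). -/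
open Matrix Quaternion

private lemma qsum_re {k : ℕ} (f : Fin k → Quaternion ℝ) :
    (∑ a, f a).re = ∑ a, (f a).re :=
  map_sum (QuaternionAlgebra.reₗ (R:=ℝ) (c₁:=-1) (c₂:=0) (c₃:=-1)) f Finset.univ

private lemma qsum_imI {k : ℕ} (f : Fin k → Quaternion ℝ) :
    (∑ a, f a).imI = ∑ a, (f a).imI :=
  map_sum (QuaternionAlgebra.imIₗ (R:=ℝ) (c₁:=-1) (c₂:=0) (c₃:=-1)) f Finset.univ

private lemma qsum_imJ {k : ℕ} (f : Fin k → Quaternion ℝ) :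
    (∑ a, f a).imJ = ∑ a, (f a).imJ :=
  map_sum (QuaternionAlgebra.imJₗ (R:=ℝ) (c₁:=-1) (c₂:=0) (c₃:=-1)) f Finset.univ

private lemma qsum_imK {k : ℕ} (f : Fin k → Quaternion ℝ) :
    (∑ a, f a).imK = ∑ a, (f a).imK :=
  map_sum (QuaternionAlgebra.imKₗ (R:=ℝ) (c₁:=-1) (c₂:=0) (c₃:=-1)) f Finset.univ

/-- Conjugating `ξ = fromBlocks 0 C (-Cᴴ) E` (with `C` quaternionic and
`E = iB + jC' + kD` for real symmetric `B, C', D`) by a block-diagonal matrix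
`g = fromBlocks g₁ 0 0 g₂` with `g₁ ∈ Sp(n)` and `g₂ ∈ SO(k)` (regarded as a quaternionic
matrix with real entries) yields a matrix of the same form.  In particular the subspace
`𝔣` of such matrices is invariant under conjugation by `Sp(n) × SO(k) ⊆ Sp(n+k)`. -/
theorem frakf_quat_conj_invariant (n k : ℕ)
    (g₁ : Matrix (Fin n) (Fin n) (Quaternion ℝ)) (hg₁ : g₁ᴴ * g₁ = 1)
    (g₂ : Matrix (Fin k) (Fin k) ℝ) (hg₂ : g₂ᵀ * g₂ = 1)
    (C : Matrix (Fin n) (Fin k) (Quaternion ℝ))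
    (B C' D : Matrix (Fin k) (Fin k) ℝ)
    (hB : B.IsSymm) (hC' : C'.IsSymm) (hD : D.IsSymm) :
    ∃ (C₁ : Matrix (Fin n) (Fin k) (Quaternion ℝ))
      (B₁ C₁' D₁ : Matrix (Fin k) (Fin k) ℝ),
      B₁.IsSymm ∧ C₁'.IsSymm ∧ D₁.IsSymm ∧
      (Matrix.fromBlocks g₁ 0 0 (g₂.map (fun a => (a : Quaternion ℝ)))) *
          (Matrix.fromBlocks 0 C (-Cᴴ)
            (Matrix.of fun i j => (⟨0, B i j, C' i j, D i j⟩ : Quaternion ℝ))) *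
          (Matrix.fromBlocks g₁ 0 0 (g₂.map (fun a => (a : Quaternion ℝ))))ᴴ =
        Matrix.fromBlocks 0 C₁ (-C₁ᴴ)
          (Matrix.of fun i j => (⟨0, B₁ i j, C₁' i j, D₁ i j⟩ : Quaternion ℝ)) := by
  set g₂m : Matrix (Fin k) (Fin k) (Quaternion ℝ) := g₂.map (fun a => (a : Quaternion ℝ)) with hg₂m
  have hg₂mH : g₂mᴴ = (g₂ᵀ).map (fun a => (a : Quaternion ℝ)) := by
    rw [hg₂m]
    refine Matrix.ext fun i j => ?_
    rw [Matrix.conjTranspose_apply, Matrix.map_apply, Matrix.map_apply, Matrix.transpose_apply,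
      Quaternion.star_coe]
  refine ⟨g₁ * C * g₂mᴴ, g₂ * B * g₂ᵀ, g₂ * C' * g₂ᵀ, g₂ * D * g₂ᵀ, ?_, ?_, ?_, ?_⟩
  · simp [Matrix.IsSymm, Matrix.transpose_mul, hB.eq, Matrix.mul_assoc]
  · simp [Matrix.IsSymm, Matrix.transpose_mul, hC'.eq, Matrix.mul_assoc]
  · simp [Matrix.IsSymm, Matrix.transpose_mul, hD.eq, Matrix.mul_assoc]
  · set EM : Matrix (Fin k) (Fin k) (Quaternion ℝ) :=
      Matrix.of fun i j => (⟨0, B i j, C' i j, D i j⟩ : Quaternion ℝ) with hEM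
    have hE : g₂m * EM * g₂mᴴ
        = (Matrix.of fun i j =>
            (⟨0, (g₂ * B * g₂ᵀ) i j, (g₂ * C' * g₂ᵀ) i j, (g₂ * D * g₂ᵀ) i j⟩ : Quaternion ℝ) :
            Matrix (Fin k) (Fin k) (Quaternion ℝ)) := by
      refine Matrix.ext fun i j => ?_
      have hEMij : (∀ a b, (EM a b).re = 0) ∧ (∀ a b, (EM a b).imI = B a b) ∧
          (∀ a b, (EM a b).imJ = C' a b) ∧ (∀ a b, (EM a b).imK = D a b) :=
        ⟨fun _ _ => rfl, fun _ _ => rfl, fun _ _ => rfl, fun _ _ => rfl⟩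
      refine (?_ : _ = (⟨0, (g₂ * B * g₂ᵀ) i j, (g₂ * C' * g₂ᵀ) i j, (g₂ * D * g₂ᵀ) i j⟩ : Quaternion ℝ))
      refine Quaternion.ext _ _ ?_ ?_ ?_ ?_ <;>
        simp [hg₂mH, hg₂m, hEMij.1, hEMij.2.1, hEMij.2.2.1, hEMij.2.2.2, Matrix.mul_apply, Matrix.map_apply, Matrix.transpose_apply,
          Quaternion.mul_coe_eq_smul, Quaternion.coe_mul_eq_smul, qsum_re, qsum_imI,
          qsum_imJ, qsum_imK, Finset.smul_sum, smul_smul, Finset.mul_sum, Finset.sum_mul,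
          mul_comm, mul_left_comm]
    simp only [Matrix.mul_assoc] at hE
    rw [Matrix.fromBlocks_conjTranspose, Matrix.fromBlocks_multiply, Matrix.fromBlocks_multiply]
    simp only [Matrix.mul_zero, Matrix.zero_mul, Matrix.mul_neg, Matrix.neg_mul, zero_add,
      add_zero, Matrix.conjTranspose_mul, Matrix.conjTranspose_conjTranspose,
      Matrix.conjTranspose_zero, Matrix.conjTranspose_neg, Matrix.mul_assoc, neg_neg, neg_zero]
    rw [hE]
end

section
/- Let V be a finite-dimensional real inner product space with three linear isometries I, J, K : V → V satisfying I² = J² = K² = -id and I∘J = K. Let G ⊆ T be subspaces of V such that A(G) ⊆ T^⊥ for each A ∈ {I, J, K}, where T^⊥ is the orthogonal complement of T. Then I(G) ∩ J(G) = {0}, and likewise J(G) ∩ K(G) = {0} and I(G) ∩ K(G) = {0}. -/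
/-!
If `A g₁ = B g₂` for two of `I, J, K` and `g₁, g₂ ∈ G`, the quaternion relations give
`g₁ = C g₂` with `C` one of `-K, -I, J`, so `g₁ ∈ T ∩ Tᗮ = 0`.
-/

open Submodule

theorem quaternion_IK_eq_neg_J {M : Type*} [Neg M] {I J K : M → M}
    (hI : ∀ v, I (I v) = -v) (hIJ : ∀ v, I (J v) = K v) (v : M) : I (K v) = -J v := by
  rw [← hIJ, hI]

section Quaternionic

variable {M F : Type*} [AddCommGroup M] [FunLike F M M] [AddMonoidHomClass F M M] {I J K : F}

theorem quaternion_JK_eq_I (hI : ∀ v, I (I v) = -v) (hK : ∀ v, K (K v) = -v)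
    (hIJ : ∀ v, I (J v) = K v) (v : M) : J (K v) = I v := by
  apply neg_injective
  rw [← hI (J (K v)), hIJ, hK, map_neg]

theorem quaternion_JI_eq_neg_K (hI : ∀ v, I (I v) = -v) (hJ : ∀ v, J (J v) = -v)
    (hK : ∀ v, K (K v) = -v) (hIJ : ∀ v, I (J v) = K v) (v : M) : J (I v) = -K v := by
  rw [← quaternion_JK_eq_I hI hK hIJ, hJ]

end Quaternionic

theorem Submodule.map_inf_map_comp_eq_bot {R M N : Type*} [Ring R] [AddCommGroup M]
    [Module R M] [AddCommGroup N] [Module R N] {A : M →ₗ[R] N} {C : M →ₗ[R] M}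
    (hA : Function.Injective A) {G : Submodule R M} (hG : Disjoint G (G.map C)) :
    G.map A ⊓ G.map (A ∘ₗ C) = ⊥ := by
  rw [map_comp, ← map_inf _ hA, disjoint_iff.mp hG, map_bot]

theorem Submodule.disjoint_map_of_mapsTo_orthogonal {𝕜 E : Type*} [RCLike 𝕜]
    [NormedAddCommGroup E] [InnerProductSpace 𝕜 E] {G T : Submodule 𝕜 E} (hGT : G ≤ T)
    {C : E →ₗ[𝕜] E} (hC : ∀ g ∈ G, C g ∈ Tᗮ) : Disjoint G (G.map C) :=
  T.orthogonal_disjoint.mono hGT ((map_le_iff_le_comap (q := Tᗮ)).mpr hC)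

theorem IG_JG_KG_trivial_intersections_general
    (V : Type*) [NormedAddCommGroup V] [InnerProductSpace ℝ V]
    (I J K : V →ₗᵢ[ℝ] V)
    (hI : ∀ v : V, I (I v) = -v) (hJ : ∀ v : V, J (J v) = -v)
    (hK : ∀ v : V, K (K v) = -v) (hIJ : ∀ v : V, I (J v) = K v)
    (G T : Submodule ℝ V) (hGT : G ≤ T)
    (hIG : ∀ g ∈ G, I g ∈ Tᗮ) (hJG : ∀ g ∈ G, J g ∈ Tᗮ) (hKG : ∀ g ∈ G, K g ∈ Tᗮ) :
    G.map I.toLinearMap ⊓ G.map J.toLinearMap = ⊥ ∧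
    G.map J.toLinearMap ⊓ G.map K.toLinearMap = ⊥ ∧
    G.map I.toLinearMap ⊓ G.map K.toLinearMap = ⊥ := by
  have hJ_eq : J.toLinearMap = I.toLinearMap ∘ₗ (-K.toLinearMap) := by
    ext v; simp [quaternion_IK_eq_neg_J hI hIJ]
  have hK_eq_J : K.toLinearMap = J.toLinearMap ∘ₗ (-I.toLinearMap) := by
    ext v; simp [quaternion_JI_eq_neg_K hI hJ hK hIJ]
  have hK_eq_I : K.toLinearMap = I.toLinearMap ∘ₗ J.toLinearMap := by
    ext v; simp [hIJ]
  refine ⟨?_, ?_, ?_⟩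
  · rw [hJ_eq]
    exact map_inf_map_comp_eq_bot I.injective
      (disjoint_map_of_mapsTo_orthogonal hGT fun g hg => neg_mem (hKG g hg))
  · rw [hK_eq_J]
    exact map_inf_map_comp_eq_bot J.injective
      (disjoint_map_of_mapsTo_orthogonal hGT fun g hg => neg_mem (hIG g hg))
  · rw [hK_eq_I]
    exact map_inf_map_comp_eq_bot I.injective (disjoint_map_of_mapsTo_orthogonal hGT hJG)

/-- In the setting of a tri-hamiltonian action at a point of `μ⁻¹(0)`: if `G ≤ T` and
`A(G) ⊆ Tᗮ` for `A ∈ {I, J, K}`, then `I(G), J(G), K(G)` intersect pairwise trivially. -/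
theorem IG_JG_KG_trivial_intersections
    (V : Type*) [NormedAddCommGroup V] [InnerProductSpace ℝ V] [FiniteDimensional ℝ V]
    (I J K : V →ₗᵢ[ℝ] V)
    (hI : ∀ v : V, I (I v) = -v) (hJ : ∀ v : V, J (J v) = -v)
    (hK : ∀ v : V, K (K v) = -v) (hIJ : ∀ v : V, I (J v) = K v)
    (G T : Submodule ℝ V) (hGT : G ≤ T)
    (hIG : ∀ g ∈ G, I g ∈ Tᗮ) (hJG : ∀ g ∈ G, J g ∈ Tᗮ) (hKG : ∀ g ∈ G, K g ∈ Tᗮ) :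
    G.map I.toLinearMap ⊓ G.map J.toLinearMap = ⊥ ∧
    G.map J.toLinearMap ⊓ G.map K.toLinearMap = ⊥ ∧
    G.map I.toLinearMap ⊓ G.map K.toLinearMap = ⊥ :=
  IG_JG_KG_trivial_intersections_general V I J K hI hJ hK hIJ G T hGT hIG hJG hKG
end

section
/- Let V be a finite-dimensional real inner product space with three linear isometries I, J, K : V → V satisfying I² = J² = K² = -id and I∘J = K. Let G ⊆ T be subspaces of V such that A(G) ⊆ T^⊥ for each A ∈ {I, J, K}. Then the subspaces I(G), J(G), K(G) are pairwise orthogonal: ⟨Iξ, Jη⟩ = ⟨Jξ, Kη⟩ = ⟨Iξ, Kη⟩ = 0 for all ξ, η ∈ G. -/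
/-!
An isometry `A` with `A² = -1` is skew-adjoint, and the quaternion relations give
`I K = -J` and `K J = -I`; so each of the three inner products equals `±⟪ξ, C η⟫` for the
remaining structure `C`, which vanishes because `C η ∈ Tᗮ` while `ξ ∈ G ≤ T`.
-/

open Submodule RealInnerProductSpace

theorem LinearIsometry.inner_map_left_of_map_map_eq_neg {V : Type*} [NormedAddCommGroup V]
    [InnerProductSpace ℝ V] (A : V →ₗᵢ[ℝ] V) (hA : ∀ v : V, A (A v) = -v) (x y : V) :
    ⟪A x, y⟫ = -⟪x, A y⟫ := by
  rw [← A.inner_map_map, hA, inner_neg_left]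

theorem IG_JG_KG_pairwise_orthogonal_general
    (V : Type*) [NormedAddCommGroup V] [InnerProductSpace ℝ V]
    (I J K : V →ₗᵢ[ℝ] V)
    (hI : ∀ v : V, I (I v) = -v) (hJ : ∀ v : V, J (J v) = -v)
    (hK : ∀ v : V, K (K v) = -v) (hIJ : ∀ v : V, I (J v) = K v)
    (G T : Submodule ℝ V) (hGT : G ≤ T)
    (hIG : ∀ g ∈ G, I g ∈ Tᗮ) (hJG : ∀ g ∈ G, J g ∈ Tᗮ) (hKG : ∀ g ∈ G, K g ∈ Tᗮ) :
    ∀ ξ ∈ G, ∀ η ∈ G,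
      ⟪I ξ, J η⟫ = 0 ∧ ⟪J ξ, K η⟫ = 0 ∧ ⟪I ξ, K η⟫ = 0 := by
  have hIK : ∀ v : V, I (K v) = -J v := fun v => by rw [← hIJ, hI]
  have hKJ : ∀ v : V, K (J v) = -I v := fun v => by rw [← hIJ, hJ, map_neg]
  intro ξ hξ η hη
  refine ⟨?_, ?_, ?_⟩
  · rw [I.inner_map_left_of_map_map_eq_neg hI, hIJ,
      inner_right_of_mem_orthogonal (hGT hξ) (hKG η hη), neg_zero]
  · rw [real_inner_comm, K.inner_map_left_of_map_map_eq_neg hK, hKJ, inner_neg_right, neg_neg,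
      inner_right_of_mem_orthogonal (hGT hη) (hIG ξ hξ)]
  · rw [I.inner_map_left_of_map_map_eq_neg hI, hIK, inner_neg_right, neg_neg,
      inner_right_of_mem_orthogonal (hGT hξ) (hJG η hη)]

/-- In the setting of a tri-hamiltonian action at a point of `μ⁻¹(0)`: the subspaces
`I(G), J(G), K(G)` are pairwise orthogonal. -/
theorem IG_JG_KG_pairwise_orthogonal
    (V : Type*) [NormedAddCommGroup V] [InnerProductSpace ℝ V] [FiniteDimensional ℝ V]
    (I J K : V →ₗᵢ[ℝ] V)
    (hI : ∀ v : V, I (I v) = -v) (hJ : ∀ v : V, J (J v) = -v)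
    (hK : ∀ v : V, K (K v) = -v) (hIJ : ∀ v : V, I (J v) = K v)
    (G T : Submodule ℝ V) (hGT : G ≤ T)
    (hIG : ∀ g ∈ G, I g ∈ Tᗮ) (hJG : ∀ g ∈ G, J g ∈ Tᗮ) (hKG : ∀ g ∈ G, K g ∈ Tᗮ) :
    ∀ ξ ∈ G, ∀ η ∈ G,
      ⟪I ξ, J η⟫ = 0 ∧ ⟪J ξ, K η⟫ = 0 ∧ ⟪I ξ, K η⟫ = 0 :=
  IG_JG_KG_pairwise_orthogonal_general V I J K hI hJ hK hIJ G T hGT hIG hJG hKG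
end

section
/- Let V be a finite-dimensional real inner product space with three linear isometries I, J, K : V → V satisfying I² = J² = K² = -id and I∘J = K. Let G ⊆ T be subspaces of V such that A(G) ⊆ T^⊥ for each A ∈ {I, J, K}, and assume dim V = dim T + 3·dim G. Then T^⊥ = I(G) ⊕ J(G) ⊕ K(G), an internal direct sum of pairwise orthogonal subspaces. -/
/-!
Each of `I`, `J`, `K` is skew-adjoint, being an isometry that squares to `-1`. With the
quaternion relations this turns `⟪A g, B g'⟫`, for distinct `A, B ∈ {I, J, K}`, into
`±⟪g, C g'⟫` with `C` the third one, which vanishes because `g ∈ T` and `C g' ∈ Tᗮ`. Hence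
`I(G)`, `J(G)`, `K(G)` are pairwise orthogonal copies of `G` inside `Tᗮ`, and their sum has
dimension `3 dim G = dim Tᗮ`.
-/

open Submodule RealInnerProductSpace FiniteDimensional

namespace LinearIsometry

theorem inner_map_left_eq_neg {𝕜 E : Type*} [RCLike 𝕜] [NormedAddCommGroup E]
    [InnerProductSpace 𝕜 E] {A : E →ₗᵢ[𝕜] E} (hA : ∀ v, A (A v) = -v) (x y : E) :
    inner 𝕜 (A x) y = -inner 𝕜 x (A y) := by
  rw [← A.inner_map_map, hA, inner_neg_left]

theorem apply_apply_eq_of_quaternion_relations {V : Type*} [NormedAddCommGroup V]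
    [InnerProductSpace ℝ V] {I J K : V →ₗᵢ[ℝ] V} (hI : ∀ v, I (I v) = -v)
    (hK : ∀ v, K (K v) = -v) (hIJ : ∀ v, I (J v) = K v) (v : V) : J (K v) = I v := by
  have h : I (I (J (K v))) = I (-v) := by rw [hIJ, hK]
  rwa [hI, map_neg, neg_inj] at h

theorem finrank_map {R E F : Type*} [Ring R] [NormedAddCommGroup E] [NormedAddCommGroup F]
    [Module R E] [Module R F] (A : E →ₗᵢ[R] F) (G : Submodule R E) :
    Module.finrank R (G.map A.toLinearMap) = Module.finrank R G :=
  (equivMapOfInjective A.toLinearMap A.injective G).finrank_eq.symm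

end LinearIsometry

namespace Submodule

theorem IsOrtho.finrank_sup {𝕜 E : Type*} [RCLike 𝕜] [NormedAddCommGroup E]
    [InnerProductSpace 𝕜 E] {U W : Submodule 𝕜 E} [FiniteDimensional 𝕜 U]
    [FiniteDimensional 𝕜 W] (h : U ⟂ W) :
    Module.finrank 𝕜 ↥(U ⊔ W) = Module.finrank 𝕜 U + Module.finrank 𝕜 W := by
  rw [← finrank_sup_add_finrank_inf_eq, h.disjoint.eq_bot, finrank_bot, add_zero]

theorem map_isOrtho_map {𝕜 E : Type*} [RCLike 𝕜] [NormedAddCommGroup E]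
    [InnerProductSpace 𝕜 E] {A B C : E →ₗ[𝕜] E} {G T : Submodule 𝕜 E} (hGT : G ≤ T)
    (hC : ∀ g ∈ G, C g ∈ Tᗮ) (c : 𝕜)
    (hABC : ∀ x y, inner 𝕜 (A x) (B y) = c * inner 𝕜 x (C y)) :
    G.map A ⟂ G.map B := by
  rw [isOrtho_iff_inner_eq]
  rintro _ ⟨x, hx, rfl⟩ _ ⟨y, hy, rfl⟩
  rw [hABC, inner_right_of_mem_orthogonal (hGT hx) (hC y hy), mul_zero]

end Submodule

/-- If moreover `dim V = dim T + 3 dim G`, then `Tᗮ = I(G) ⊕ J(G) ⊕ K(G)`, an internal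
direct sum of pairwise orthogonal subspaces. -/
theorem orthogonal_eq_IG_JG_KG
    (V : Type*) [NormedAddCommGroup V] [InnerProductSpace ℝ V] [FiniteDimensional ℝ V]
    (I J K : V →ₗᵢ[ℝ] V)
    (hI : ∀ v : V, I (I v) = -v) (hJ : ∀ v : V, J (J v) = -v)
    (hK : ∀ v : V, K (K v) = -v) (hIJ : ∀ v : V, I (J v) = K v)
    (G T : Submodule ℝ V) (hGT : G ≤ T)
    (hIG : ∀ g ∈ G, I g ∈ Tᗮ) (hJG : ∀ g ∈ G, J g ∈ Tᗮ) (hKG : ∀ g ∈ G, K g ∈ Tᗮ)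
    (hdim : Module.finrank ℝ V = Module.finrank ℝ T + 3 * Module.finrank ℝ G) :
    Tᗮ = G.map I.toLinearMap ⊔ G.map J.toLinearMap ⊔ G.map K.toLinearMap ∧
    (∀ x ∈ G.map I.toLinearMap, ∀ y ∈ G.map J.toLinearMap, ⟪x, y⟫ = 0) ∧
    (∀ x ∈ G.map J.toLinearMap, ∀ y ∈ G.map K.toLinearMap, ⟪x, y⟫ = 0) ∧
    (∀ x ∈ G.map I.toLinearMap, ∀ y ∈ G.map K.toLinearMap, ⟪x, y⟫ = 0) := by
  have hIJ_ortho : G.map I.toLinearMap ⟂ G.map J.toLinearMap :=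
    map_isOrtho_map hGT hKG (-1) fun x y => by
      simp only [LinearIsometry.coe_toLinearMap]
      rw [I.inner_map_left_eq_neg hI, hIJ, neg_one_mul]
  have hJK_ortho : G.map J.toLinearMap ⟂ G.map K.toLinearMap :=
    map_isOrtho_map hGT hIG (-1) fun x y => by
      simp only [LinearIsometry.coe_toLinearMap]
      rw [J.inner_map_left_eq_neg hJ,
        LinearIsometry.apply_apply_eq_of_quaternion_relations hI hK hIJ, neg_one_mul]
  have hIK_ortho : G.map I.toLinearMap ⟂ G.map K.toLinearMap :=
    map_isOrtho_map hGT hJG 1 fun x y => by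
      simp only [LinearIsometry.coe_toLinearMap]
      rw [← hIJ, I.inner_map_map, one_mul]
  refine ⟨?_, isOrtho_iff_inner_eq.1 hIJ_ortho, isOrtho_iff_inner_eq.1 hJK_ortho,
    isOrtho_iff_inner_eq.1 hIK_ortho⟩
  have hle : G.map I.toLinearMap ⊔ G.map J.toLinearMap ⊔ G.map K.toLinearMap ≤ Tᗮ := by
    simp only [sup_le_iff, map_le_iff_le_comap]
    exact ⟨⟨hIG, hJG⟩, hKG⟩
  refine (eq_of_le_of_finrank_le hle ?_).symm
  have hT := T.finrank_add_finrank_orthogonal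
  rw [(isOrtho_sup_left.2 ⟨hIK_ortho, hJK_ortho⟩).finrank_sup, hIJ_ortho.finrank_sup,
    I.finrank_map, J.finrank_map, K.finrank_map]
  omega
end

section
/- Let V be a finite-dimensional real inner product space with three linear isometries I, J, K : V → V satisfying I² = J² = K² = -id and I∘J = K. Let G ⊆ T be subspaces of V such that A(G) ⊆ T^⊥ for each A ∈ {I, J, K}, and assume dim V = dim T + 3·dim G. Define H = T ∩ G^⊥, the orthogonal complement of G inside T. Then H is invariant under I, J and K: I(H) = H, J(H) = H, K(H) = H; that is, H is a quaternionic subspace of V. -/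
open Submodule

/-- The horizontal space `H = T ⊓ Gᗮ` is a quaternionic subspace: it is invariant
under `I`, `J` and `K`. -/
theorem horizontal_space_quaternionic
    (V : Type*) [NormedAddCommGroup V] [InnerProductSpace ℝ V] [FiniteDimensional ℝ V]
    (I J K : V →ₗᵢ[ℝ] V)
    (hI : ∀ v : V, I (I v) = -v) (hJ : ∀ v : V, J (J v) = -v)
    (hK : ∀ v : V, K (K v) = -v) (hIJ : ∀ v : V, I (J v) = K v)
    (G T : Submodule ℝ V) (hGT : G ≤ T)
    (hIG : ∀ g ∈ G, I g ∈ Tᗮ) (hJG : ∀ g ∈ G, J g ∈ Tᗮ) (hKG : ∀ g ∈ G, K g ∈ Tᗮ)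
    (hdim : Module.finrank ℝ V = Module.finrank ℝ T + 3 * Module.finrank ℝ G) :
    (T ⊓ Gᗮ).map I.toLinearMap = T ⊓ Gᗮ ∧
    (T ⊓ Gᗮ).map J.toLinearMap = T ⊓ Gᗮ ∧
    (T ⊓ Gᗮ).map K.toLinearMap = T ⊓ Gᗮ := by
  -- adjoint identity for an isometry squaring to -1
  have adj : ∀ (A : V →ₗᵢ[ℝ] V), (∀ v, A (A v) = -v) → ∀ v w : V,
      (inner ℝ (A v) w : ℝ) = -(inner ℝ v (A w) : ℝ) := by
    intro A hA2 v w
    have h0 : (inner ℝ (A v) (A (A w)) : ℝ) = inner ℝ v (A w) := A.inner_map_map v (A w)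
    rw [hA2 w, inner_neg_right] at h0
    linarith
  have aI := adj I hI
  have aJ := adj J hJ
  have aK := adj K hK
  -- quaternionic multiplication table
  have key : ∀ v, J (I (J v)) = I v := by
    intro v
    have h1 : I (J (I (J v))) = -v := by
      simp only [hIJ]; exact hK v
    have h2 : I (I (J (I (J v)))) = I (-v) := congrArg I h1
    rw [hI, map_neg] at h2
    exact neg_injective h2
  have hJI : ∀ v, J (I v) = -(K v) := by
    intro v
    have h := key (-(J v))
    simp only [map_neg, hJ, neg_neg, hIJ] at h
    exact h
  have hIK : ∀ v, I (K v) = -(J v) := by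
    intro v; rw [← hIJ, hI]
  have hKI : ∀ v, K (I v) = J v := by
    intro v; rw [← hIJ, hJI, map_neg, hIK, neg_neg]
  have hKJ : ∀ v, K (J v) = -(I v) := by
    intro v; rw [← hIJ, hJ, map_neg]
  have hJK : ∀ v, J (K v) = I v := by
    intro v; rw [← hIJ]; exact key v
  -- convenient orthogonality facts
  have hTp : ∀ x ∈ Tᗮ, ∀ u ∈ T, (inner ℝ u x : ℝ) = 0 :=
    fun x hx u hu => (Submodule.mem_orthogonal T x).mp hx u hu
  -- the three images of G
  set mI := G.map I.toLinearMap with hmI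
  set mJ := G.map J.toLinearMap with hmJ
  set mK := G.map K.toLinearMap with hmK
  have frEq : ∀ (A : V →ₗᵢ[ℝ] V),
      Module.finrank ℝ (G.map A.toLinearMap) = Module.finrank ℝ G :=
    fun A => (G.equivMapOfInjective A.toLinearMap A.injective).finrank_eq.symm
  have leTp : ∀ (A : V →ₗᵢ[ℝ] V), (∀ g ∈ G, A g ∈ Tᗮ) → G.map A.toLinearMap ≤ Tᗮ := by
    intro A hA
    rintro _ ⟨g, hg, rfl⟩
    exact hA g hg
  have oIJ : mI ⟂ mJ := by
    rw [Submodule.isOrtho_iff_inner_eq]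
    rintro _ ⟨g, hg, rfl⟩ _ ⟨g', hg', rfl⟩
    simp only [LinearIsometry.coe_toLinearMap]
    have : (inner ℝ (I g) (J g') : ℝ) = -(inner ℝ g (I (J g')) : ℝ) := aI g (J g')
    rw [this, hIJ, hTp _ (hKG g' hg') g (hGT hg), neg_zero]
  have oIK : mI ⟂ mK := by
    rw [Submodule.isOrtho_iff_inner_eq]
    rintro _ ⟨g, hg, rfl⟩ _ ⟨g', hg', rfl⟩
    simp only [LinearIsometry.coe_toLinearMap]
    have : (inner ℝ (I g) (K g') : ℝ) = -(inner ℝ g (I (K g')) : ℝ) := aI g (K g')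
    rw [this, hIK, inner_neg_right, hTp _ (hJG g' hg') g (hGT hg), neg_zero, neg_zero]
  have oJK : mJ ⟂ mK := by
    rw [Submodule.isOrtho_iff_inner_eq]
    rintro _ ⟨g, hg, rfl⟩ _ ⟨g', hg', rfl⟩
    simp only [LinearIsometry.coe_toLinearMap]
    have : (inner ℝ (J g) (K g') : ℝ) = -(inner ℝ g (J (K g')) : ℝ) := aJ g (K g')
    rw [this, hJK, hTp _ (hIG g' hg') g (hGT hg), neg_zero]
  -- dimension counting: mI ⊔ mJ ⊔ mK = Tᗮ
  have fr_sup : ∀ A B : Submodule ℝ V, A ⟂ B →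
      Module.finrank ℝ ↥(A ⊔ B) = Module.finrank ℝ A + Module.finrank ℝ B := by
    intro A B h
    have h2 := Submodule.finrank_sup_add_finrank_inf_eq A B
    rw [h.disjoint.eq_bot, finrank_bot] at h2
    omega
  have frIJ : Module.finrank ℝ ↥(mI ⊔ mJ) =
      Module.finrank ℝ G + Module.finrank ℝ G := by
    rw [fr_sup mI mJ oIJ, hmI, hmJ, frEq I, frEq J]
  have frP : Module.finrank ℝ ↥(mI ⊔ mJ ⊔ mK) = 3 * Module.finrank ℝ G := by
    rw [fr_sup _ mK (Submodule.isOrtho_sup_left.mpr ⟨oIK, oJK⟩), frIJ, hmK, frEq K]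
    ring
  have frTp : Module.finrank ℝ ↥(Tᗮ) = 3 * Module.finrank ℝ G := by
    have := Submodule.finrank_add_finrank_orthogonal T
    omega
  have hPT : mI ⊔ mJ ⊔ mK = Tᗮ := by
    refine Submodule.eq_of_le_of_finrank_le ?_ ?_
    · exact sup_le (sup_le (leTp I hIG) (leTp J hJG)) (leTp K hKG)
    · rw [frP, frTp]
  -- membership criterion for orthogonals of the images
  have memMapOrth : ∀ (A : V →ₗᵢ[ℝ] V) (x : V),
      (∀ g ∈ G, (inner ℝ (A g) x : ℝ) = 0) → x ∈ (G.map A.toLinearMap)ᗮ := by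
    intro A x hx
    refine (Submodule.mem_orthogonal _ _).mpr ?_
    rintro _ ⟨g, hg, rfl⟩
    exact hx g hg
  -- the key step: each of I, J, K maps H into H
  have step : ∀ (A : V →ₗᵢ[ℝ] V),
      (∀ v w : V, (inner ℝ (A v) w : ℝ) = -(inner ℝ v (A w) : ℝ)) →
      (∀ g ∈ G, A g ∈ Tᗮ) →
      (∀ g ∈ G, ∀ h, h ∈ T → h ∈ Gᗮ →
        (inner ℝ h (A (I g)) : ℝ) = 0 ∧ (inner ℝ h (A (J g)) : ℝ) = 0 ∧
        (inner ℝ h (A (K g)) : ℝ) = 0) →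
      ∀ h ∈ T ⊓ Gᗮ, A h ∈ T ⊓ Gᗮ := by
    intro A adjA hAG hcross h hh
    obtain ⟨hhT, hhG⟩ := hh
    constructor
    · -- A h ∈ T
      rw [← T.orthogonal_orthogonal, ← hPT, ← Submodule.inf_orthogonal,
        ← Submodule.inf_orthogonal]
      refine ⟨⟨memMapOrth I _ ?_, memMapOrth J _ ?_⟩, memMapOrth K _ ?_⟩ <;>
        intro g hg
      · rw [real_inner_comm, adjA h (I g)]
        exact neg_eq_zero.mpr (hcross g hg h hhT hhG).1
      · rw [real_inner_comm, adjA h (J g)]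
        exact neg_eq_zero.mpr (hcross g hg h hhT hhG).2.1
      · rw [real_inner_comm, adjA h (K g)]
        exact neg_eq_zero.mpr (hcross g hg h hhT hhG).2.2
    · -- A h ∈ Gᗮ
      refine (Submodule.mem_orthogonal _ _).mpr ?_
      intro g hg
      rw [real_inner_comm, adjA h g, hTp _ (hAG g hg) h hhT, neg_zero]
  -- the cross conditions for I, J, K
  have hGh : ∀ h ∈ Gᗮ, ∀ g ∈ G, (inner ℝ h g : ℝ) = 0 := by
    intro h hh g hg
    rw [real_inner_comm]
    exact (Submodule.mem_orthogonal G h).mp hh g hg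
  have crossI : ∀ g ∈ G, ∀ h, h ∈ T → h ∈ Gᗮ →
      (inner ℝ h (I (I g)) : ℝ) = 0 ∧ (inner ℝ h (I (J g)) : ℝ) = 0 ∧
      (inner ℝ h (I (K g)) : ℝ) = 0 := by
    intro g hg h hhT hhG
    refine ⟨?_, ?_, ?_⟩
    · rw [hI, inner_neg_right, hGh h hhG g hg, neg_zero]
    · rw [hIJ]; exact hTp _ (hKG g hg) h hhT
    · rw [hIK, inner_neg_right, hTp _ (hJG g hg) h hhT, neg_zero]
  have crossJ : ∀ g ∈ G, ∀ h, h ∈ T → h ∈ Gᗮ →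
      (inner ℝ h (J (I g)) : ℝ) = 0 ∧ (inner ℝ h (J (J g)) : ℝ) = 0 ∧
      (inner ℝ h (J (K g)) : ℝ) = 0 := by
    intro g hg h hhT hhG
    refine ⟨?_, ?_, ?_⟩
    · rw [hJI, inner_neg_right, hTp _ (hKG g hg) h hhT, neg_zero]
    · rw [hJ, inner_neg_right, hGh h hhG g hg, neg_zero]
    · rw [hJK]; exact hTp _ (hIG g hg) h hhT
  have crossK : ∀ g ∈ G, ∀ h, h ∈ T → h ∈ Gᗮ →
      (inner ℝ h (K (I g)) : ℝ) = 0 ∧ (inner ℝ h (K (J g)) : ℝ) = 0 ∧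
      (inner ℝ h (K (K g)) : ℝ) = 0 := by
    intro g hg h hhT hhG
    refine ⟨?_, ?_, ?_⟩
    · rw [hKI]; exact hTp _ (hJG g hg) h hhT
    · rw [hKJ, inner_neg_right, hTp _ (hIG g hg) h hhT, neg_zero]
    · rw [hK, inner_neg_right, hGh h hhG g hg, neg_zero]
  -- upgrade the inclusions to equalities
  have eqOf : ∀ (A : V →ₗᵢ[ℝ] V), (∀ v, A (A v) = -v) →
      (∀ h ∈ T ⊓ Gᗮ, A h ∈ T ⊓ Gᗮ) →
      (T ⊓ Gᗮ).map A.toLinearMap = T ⊓ Gᗮ := by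
    intro A hA2 hmem
    apply le_antisymm
    · rintro _ ⟨h, hh, rfl⟩
      exact hmem h hh
    · intro h hh
      refine ⟨A (-h), hmem _ (neg_mem hh), ?_⟩
      show A (A (-h)) = h
      rw [hA2, neg_neg]
  exact ⟨eqOf I hI (step I aI hIG crossI), eqOf J hJ (step J aJ hJG crossJ),
    eqOf K hK (step K aK hKG crossK)⟩
end

section
/- Let V be a real vector space, I : V → V a linear map with I² = -id, and S : V × V → ℝ a symmetric bilinear form. Define the bilinear form R by R(x, y) = S(x, I y). If R is alternating (R(x, x) = 0 for all x), then R is of type (1,1) with respect to I, i.e. R(I x, I y) = R(x, y) for all x, y ∈ V. -/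
theorem LinearMap.IsAlt.compl₁₂_eq_self {R M N : Type*} [CommSemiring R]
    [AddCommGroup M] [Module R M] [AddCommGroup N] [Module R N]
    {I : M →ₗ[R] M} (hI : ∀ v, I (I v) = -v)
    {S : M →ₗ[R] M →ₗ[R] N} (hS : ∀ x y, S x y = S y x) (halt : (S.compl₂ I).IsAlt) :
    (S.compl₂ I).compl₁₂ I I = S.compl₂ I := by
  ext x y
  calc S (I x) (I (I y)) = -S y (I x) := by rw [hI, map_neg, hS]
    _ = S x (I y) := halt.neg y x

/-- If `I² = -id`, `S` is a symmetric bilinear form and `R(x,y) = S(x, Iy)` is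
alternating, then `R` is of type `(1,1)` with respect to `I`:
`R(Ix, Iy) = R(x,y)` for all `x, y`. -/
theorem type_one_one_of_alternating
    (V : Type*) [AddCommGroup V] [Module ℝ V]
    (I : V →ₗ[ℝ] V) (hI : ∀ v : V, I (I v) = -v)
    (S : V →ₗ[ℝ] V →ₗ[ℝ] ℝ) (hS : ∀ x y : V, S x y = S y x)
    (halt : ∀ x : V, S x (I x) = 0) :
    ∀ x y : V, S (I x) (I (I y)) = S x (I y) :=
  LinearMap.congr_fun₂ (LinearMap.IsAlt.compl₁₂_eq_self hI hS halt)
end
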